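/- Let w be an infinite binary word that has infinitely many indices i with w_i = 0 and infinitely many indices i with w_i = 1. Then for every real p > 0, there exists N such that d_n(w) > n^p for all n ≥ N. -/

import Mathlib

open Filter

/-- `dCount w n` is the number of permutations `π` of `{1,…,n}` (modeled as `Fin n`,
zero-based) such that for every `1 ≤ i ≤ n-1`, `π(i) > π(i+1)` iff the `i`-th letter of the
infinite binary word `w` (1-indexed, `w 0` is irrelevant) equals `1` (i.e. `true`). -/
noncomputable def dCount (w : ℕ → Bool) (n : ℕ) : ℕ :=
  Nat.card {π : Equiv.Perm (Fin n) //
    ∀ i : ℕ, ∀ h : i + 1 < n,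
      (π ⟨i + 1, h⟩ < π ⟨i, Nat.lt_of_succ_lt h⟩ ↔ w (i + 1) = true)}

/-!
Reversing all values exchanges ascents and descents, so for the last switch `s` of `w` before
`n` we may assume `w s = 1` and `w j = 0` for `s < j ≤ n`. A permutation of length `n + 1`
compatible with `w` is then obtained from one of length `s` by relabelling it with any `s`-set
`C` of values avoiding `0` and appending the complement of `C` in increasing order; the value `0`
right after position `s` creates the required descent. Hence `C(n, s) * d_s ≤ d_(n+1)`. If the
constant tail `n - s` is long, `C(n, s) ≥ C(n, ρ + 1)` is already of order `n ^ (ρ + 1)`; if it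
is short, `C(n, s) ≥ n` multiplies the inductive bound `d_s ≳ s ^ ρ ≈ n ^ ρ`. As `w` switches
infinitely often, induction on `ρ` gives `d_n ≳ n ^ ρ` for every `ρ`.
-/

open Equiv Finset Function

-- `dCount w n` is definitionally `Nat.card {π : Perm (Fin n) // HasDescentWord w π}`.
def HasDescentWord (w : ℕ → Bool) {n : ℕ} (π : Perm (Fin n)) : Prop :=
  ∀ i : ℕ, ∀ h : i + 1 < n, (π ⟨i + 1, h⟩ < π ⟨i, Nat.lt_of_succ_lt h⟩ ↔ w (i + 1) = true)

lemma hasDescentWord_revPerm_mul_iff (w : ℕ → Bool) {n : ℕ} (π : Perm (Fin n)) :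
    HasDescentWord w (Fin.revPerm * π) ↔ HasDescentWord (fun i => !w i) π := by
  refine forall_congr' fun i => forall_congr' fun h => ?_
  have hne : π ⟨i + 1, h⟩ ≠ π ⟨i, Nat.lt_of_succ_lt h⟩ := by simp
  simp only [Perm.mul_apply, Fin.revPerm_apply, Fin.rev_lt_rev]
  cases w (i + 1) <;> simp [hne.le_iff_lt, hne.symm.le_iff_lt]

lemma dCount_not (w : ℕ → Bool) (n : ℕ) : dCount (fun i => !w i) n = dCount w n :=
  Nat.card_congr <| (Equiv.mulLeft Fin.revPerm).subtypeEquiv fun π =>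
    (hasDescentWord_revPerm_mul_iff w π).symm

lemma card_compl_of_card_eq {n s : ℕ} {C : Finset (Fin n)} (hC : #C = s) : #Cᶜ = n - s := by
  rw [card_compl, Fintype.card_fin, hC]

section BlockPerm

variable {n s : ℕ} (C : Finset (Fin n)) (hC : #C = s) (σ : Perm (Fin s))

def blockFun (j : Fin n) : Fin n :=
  if h : j.val < s then C.orderEmbOfFin hC (σ ⟨j, h⟩)
  else Cᶜ.orderEmbOfFin (card_compl_of_card_eq hC) ⟨j - s, by omega⟩

lemma blockFun_injective : Injective (blockFun C hC σ) := by
  intro i j hij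
  unfold blockFun at hij
  split_ifs at hij with hi hj hj
  · simpa [Fin.ext_iff] using σ.injective ((C.orderEmbOfFin hC).injective hij)
  · exact absurd (hij ▸ C.orderEmbOfFin_mem hC _) (mem_compl.mp (orderEmbOfFin_mem _ _ _))
  · exact absurd (hij ▸ C.orderEmbOfFin_mem hC _) (mem_compl.mp (orderEmbOfFin_mem _ _ _))
  · have := congrArg Fin.val ((Cᶜ.orderEmbOfFin _).injective hij)
    simp only at this
    omega

noncomputable def blockPerm : Perm (Fin n) :=
  .ofBijective _ (Finite.injective_iff_bijective.mp (blockFun_injective C hC σ))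

lemma blockPerm_apply_of_lt (j : Fin n) (h : j.val < s) :
    blockPerm C hC σ j = C.orderEmbOfFin hC (σ ⟨j, h⟩) := by
  simp [blockPerm, blockFun, h]

lemma blockPerm_apply_of_le (j : Fin n) (h : s ≤ j.val) :
    blockPerm C hC σ j =
      Cᶜ.orderEmbOfFin (card_compl_of_card_eq hC) ⟨j - s, by omega⟩ := by
  simp [blockPerm, blockFun, h.not_gt]

lemma mem_iff_blockPerm_symm_lt (x : Fin n) : x ∈ C ↔ ((blockPerm C hC σ).symm x).val < s := by
  obtain ⟨j, rfl⟩ := (blockPerm C hC σ).surjective x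
  rw [Equiv.symm_apply_apply]
  by_cases h : j.val < s
  · simp [h, blockPerm_apply_of_lt C hC σ j h, orderEmbOfFin_mem]
  · rw [blockPerm_apply_of_le C hC σ j (not_lt.mp h)]
    simpa [h] using mem_compl.mp (orderEmbOfFin_mem _ _ _)

lemma blockPerm_injective {C' : Finset (Fin n)} (hC' : #C' = s) {σ' : Perm (Fin s)}
    (h : blockPerm C hC σ = blockPerm C' hC' σ') : C = C' ∧ σ = σ' := by
  obtain rfl : C = C' := by
    ext x
    rw [mem_iff_blockPerm_symm_lt C hC σ, mem_iff_blockPerm_symm_lt C' hC' σ', h]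
  refine ⟨rfl, Equiv.ext fun k => ?_⟩
  have hkn : k.val < n := k.2.trans_le (hC ▸ card_le_univ C |>.trans_eq (Fintype.card_fin n))
  have := congrFun (congrArg DFunLike.coe h) ⟨k, hkn⟩
  rw [blockPerm_apply_of_lt C hC σ _ k.2, blockPerm_apply_of_lt C hC σ' _ k.2] at this
  exact (C.orderEmbOfFin hC).injective this

end BlockPerm

lemma orderEmbOfFin_zero_eq_zero {n k : ℕ} {A : Finset (Fin (n + 1))} (hA : #A = k) (h0 : 0 ∈ A)
    (hk : 0 < k) : A.orderEmbOfFin hA ⟨0, hk⟩ = 0 := by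
  rw [orderEmbOfFin_zero]
  exact le_antisymm (min'_le A 0 h0) (Fin.zero_le _)

lemma hasDescentWord_blockPerm {w : ℕ → Bool} {n s : ℕ} {C : Finset (Fin (n + 1))}
    (hC : #C = s) (h0 : (0 : Fin (n + 1)) ∉ C) {σ : Perm (Fin s)} (hσ : HasDescentWord w σ)
    (hws : w s = true) (htail : ∀ j, s < j → j ≤ n → w j = false) :
    HasDescentWord w (blockPerm C hC σ) := by
  intro i hi
  rcases lt_trichotomy (i + 1) s with h | h | h
  · rw [blockPerm_apply_of_lt C hC σ _ h, blockPerm_apply_of_lt C hC σ _ (by omega : i < s),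
      OrderEmbedding.lt_iff_lt]
    exact hσ i h
  · subst h
    refine iff_of_true ?_ hws
    rw [blockPerm_apply_of_le C hC σ _ le_rfl, blockPerm_apply_of_lt C hC σ _ i.lt_succ_self]
    simp only [Nat.sub_self]
    rw [orderEmbOfFin_zero_eq_zero _ (mem_compl.mpr h0), Fin.pos_iff_ne_zero]
    exact ne_of_mem_of_not_mem (orderEmbOfFin_mem _ _ _) h0
  · rw [blockPerm_apply_of_le C hC σ _ h.le, blockPerm_apply_of_le C hC σ _ (by omega : s ≤ i),
      OrderEmbedding.lt_iff_lt, htail (i + 1) h (by omega)]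
    simp only [Fin.mk_lt_mk, Bool.false_eq_true, iff_false]
    omega

lemma choose_mul_dCount_le_of_tail_false {w : ℕ → Bool} {n s : ℕ} (hws : w s = true)
    (htail : ∀ j, s < j → j ≤ n → w j = false) :
    n.choose s * dCount w s ≤ dCount w (n + 1) := by
  let T := powersetCard s (univ.erase (0 : Fin (n + 1)))
  let F : {σ : Perm (Fin s) // HasDescentWord w σ} × T →
      {π : Perm (Fin (n + 1)) // HasDescentWord w π} := fun ⟨σ, C⟩ =>
    have hC := mem_powersetCard.mp C.2
    ⟨blockPerm C.1 hC.2 σ.1, hasDescentWord_blockPerm hC.2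
      (fun h => by simpa using hC.1 h) σ.2 hws htail⟩
  have hF : Injective F := by
    rintro ⟨σ, C⟩ ⟨σ', C'⟩ h
    obtain ⟨hCC, hσσ⟩ := blockPerm_injective _ _ _ _ (Subtype.ext_iff.mp h)
    rw [Subtype.ext hσσ, Subtype.ext hCC]
  have hT : Nat.card T = n.choose s := by
    rw [Nat.card_eq_finsetCard, card_powersetCard, card_erase_of_mem (mem_univ _), card_univ,
      Fintype.card_fin, Nat.add_sub_cancel]
  have hcard := Nat.card_le_card_of_injective F hF
  rwa [Nat.card_prod, hT, mul_comm] at hcard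

lemma choose_mul_dCount_le {w : ℕ → Bool} {n s : ℕ} (htail : ∀ j, s < j → j ≤ n → w j ≠ w s) :
    n.choose s * dCount w s ≤ dCount w (n + 1) := by
  cases hws : w s
  · rw [← dCount_not w, ← dCount_not w]
    exact choose_mul_dCount_le_of_tail_false (by simpa using hws)
      fun j hj hjn => by simpa [hws] using htail j hj hjn
  · exact choose_mul_dCount_le_of_tail_false hws
      fun j hj hjn => by simpa [hws] using htail j hj hjn

lemma dCount_le_succ (w : ℕ → Bool) (n : ℕ) : dCount w n ≤ dCount w (n + 1) := by
  simpa using choose_mul_dCount_le (w := w) (n := n) (s := n) fun j hj hjn => by omega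

lemma dCount_pos (w : ℕ → Bool) (n : ℕ) : 0 < dCount w n := by
  induction n with
  | zero => exact Nat.card_pos_iff.mpr ⟨⟨⟨1, fun _ h => absurd h (by omega)⟩⟩, inferInstance⟩
  | succ n ih => exact ih.trans_le (dCount_le_succ w n)

lemma exists_switch_ge {w : ℕ → Bool} (h0 : ∀ N : ℕ, ∃ i, N ≤ i ∧ w i = false)
    (h1 : ∀ N : ℕ, ∃ i, N ≤ i ∧ w i = true) (N : ℕ) : ∃ K, N ≤ K ∧ w K ≠ w (K + 1) := by
  by_contra! hconst
  have hw : ∀ i, N ≤ i → w i = w N := fun i hi => by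
    induction i, hi using Nat.le_induction with
    | base => rfl
    | succ i hi ih => rw [← hconst i hi, ih]
  obtain ⟨i, hi, hwi⟩ := h0 N
  obtain ⟨j, hj, hwj⟩ := h1 N
  exact Bool.false_ne_true (hwi.symm.trans ((hw i hi).trans ((hw j hj).symm.trans hwj)))

lemma exists_last_switch {w : ℕ → Bool} {K n : ℕ} (hK : w K ≠ w (K + 1)) (hn : K < n) :
    ∃ s, K ≤ s ∧ s < n ∧ ∀ j, s < j → j ≤ n → w j ≠ w s := by
  induction n, hn using Nat.le_induction with
  | base => exact ⟨K, le_rfl, K.lt_succ_self, fun j hj hjn => (by omega : j = K + 1) ▸ hK.symm⟩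
  | succ n hn ih =>
    obtain ⟨s, hKs, hsn, htail⟩ := ih
    by_cases hlast : w (n + 1) = w s
    · refine ⟨n, by omega, n.lt_succ_self, fun j hj hjn => ?_⟩
      rw [(by omega : j = n + 1), hlast]
      exact (htail n hsn le_rfl).symm
    · refine ⟨s, hKs, by omega, fun j hj hjn => ?_⟩
      rcases (by omega : j ≤ n ∨ j = n + 1) with hjn | rfl
      exacts [htail j hj hjn, hlast]

lemma Nat.choose_le_choose_of_le_half {n a b : ℕ} (hab : a ≤ b) (hb : b ≤ n / 2) :
    n.choose a ≤ n.choose b := by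
  induction b, hab using Nat.le_induction with
  | base => rfl
  | succ b hab ih => exact (ih (by omega)).trans (Nat.choose_le_succ_of_lt_half_left (by omega))

lemma Nat.choose_le_choose_of_le_of_add_le {n a b : ℕ} (hab : a ≤ b) (han : a + b ≤ n) :
    n.choose a ≤ n.choose b := by
  by_cases hb : b ≤ n / 2
  · exact Nat.choose_le_choose_of_le_half hab hb
  · rw [← Nat.choose_symm (by omega : b ≤ n)]
    exact Nat.choose_le_choose_of_le_half (by omega) (by omega)

lemma half_pow_div_factorial_le_choose {n k : ℕ} (hk : 2 * k ≤ n + 1) :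
    (((n : ℝ) + 1) / 2) ^ k / k.factorial ≤ n.choose k := by
  refine le_trans ?_ (Nat.pow_le_choose k n)
  gcongr
  have hk' : 2 * (k : ℝ) ≤ n + 1 := by exact_mod_cast hk
  rw [Nat.cast_sub (by omega)]
  push_cast
  linarith

lemma half_pow_le_dCount_succ {w : ℕ → Bool} {K ρ n : ℕ} {c : ℝ} (hc0 : 0 ≤ c)
    (hc : ∀ m, K ≤ m → c * (m : ℝ) ^ ρ ≤ dCount w m) (hK : w K ≠ w (K + 1)) (hρK : ρ + 1 ≤ K)
    (hKn : K < n) (hn : 2 * (ρ + 1) ≤ n + 1) :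
    min c ((ρ + 1).factorial : ℝ)⁻¹ * (((n : ℝ) + 1) / 2) ^ (ρ + 1) ≤ dCount w (n + 1) := by
  obtain ⟨s, hKs, hsn, htail⟩ := exists_last_switch hK hKn
  have hstep : (n.choose s : ℝ) * dCount w s ≤ dCount w (n + 1) := by
    exact_mod_cast choose_mul_dCount_le htail
  rcases le_or_gt (ρ + 1) (n - s) with hlong | hshort
  · have hds : (1 : ℝ) ≤ dCount w s := by exact_mod_cast dCount_pos w s
    have hchoose : (n.choose (ρ + 1) : ℝ) ≤ n.choose s := by
      exact_mod_cast Nat.choose_le_choose_of_le_of_add_le (by omega) (by omega)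
    calc min c ((ρ + 1).factorial : ℝ)⁻¹ * (((n : ℝ) + 1) / 2) ^ (ρ + 1)
        ≤ ((ρ + 1).factorial : ℝ)⁻¹ * (((n : ℝ) + 1) / 2) ^ (ρ + 1) := by
          gcongr; exact min_le_right _ _
      _ = (((n : ℝ) + 1) / 2) ^ (ρ + 1) / (ρ + 1).factorial := inv_mul_eq_div _ _
      _ ≤ n.choose (ρ + 1) := half_pow_div_factorial_le_choose hn
      _ ≤ n.choose s * dCount w s := hchoose.trans (le_mul_of_one_le_right (by positivity) hds)
      _ ≤ dCount w (n + 1) := hstep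
  · have hchoose : (n : ℝ) ≤ n.choose s := by
      exact_mod_cast (Nat.choose_one_right n).symm.le.trans
        (Nat.choose_le_choose_of_le_of_add_le (by omega) (by omega))
    have hhalf_n : ((n : ℝ) + 1) / 2 ≤ n := by
      have : (1 : ℝ) ≤ n := by exact_mod_cast (by omega : 1 ≤ n)
      linarith
    have hhalf_s : ((n : ℝ) + 1) / 2 ≤ s := by
      have : (n : ℝ) + 1 ≤ 2 * s := by exact_mod_cast (by omega : n + 1 ≤ 2 * s)
      linarith
    calc min c ((ρ + 1).factorial : ℝ)⁻¹ * (((n : ℝ) + 1) / 2) ^ (ρ + 1)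
        ≤ c * ((((n : ℝ) + 1) / 2) * (((n : ℝ) + 1) / 2) ^ ρ) := by
          rw [pow_succ']; gcongr; exact min_le_left _ _
      _ ≤ c * (n * (s : ℝ) ^ ρ) := by gcongr
      _ = n * (c * (s : ℝ) ^ ρ) := by ring
      _ ≤ n.choose s * dCount w s := by gcongr; exact hc s hKs
      _ ≤ dCount w (n + 1) := hstep

lemma exists_pow_le_dCount {w : ℕ → Bool} (hsw : ∀ N, ∃ K, N ≤ K ∧ w K ≠ w (K + 1)) (ρ : ℕ) :
    ∃ c > (0 : ℝ), ∃ M : ℕ, ∀ m : ℕ, M ≤ m → c * (m : ℝ) ^ ρ ≤ dCount w m := by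
  induction ρ with
  | zero =>
    exact ⟨1, one_pos, 0, fun m _ => by simpa using (Nat.one_le_cast (α := ℝ)).mpr (dCount_pos w m)⟩
  | succ ρ ih =>
    obtain ⟨c, hc0, M, hc⟩ := ih
    obtain ⟨K, hK, hKsw⟩ := hsw (M + ρ + 1)
    refine ⟨min c ((ρ + 1).factorial : ℝ)⁻¹ / 2 ^ (ρ + 1), by positivity,
      K + 2 * (ρ + 1) + 1, fun m hm => ?_⟩
    obtain ⟨n, rfl⟩ : ∃ n, m = n + 1 := ⟨m - 1, by omega⟩
    have := half_pow_le_dCount_succ hc0.le (fun m' hm' => hc m' (by omega)) hKsw (by omega)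
      (n := n) (by omega) (by omega)
    convert this using 1
    push_cast
    rw [div_pow]
    ring

theorem stmt10_general (w : ℕ → Bool)
    (h0 : ∀ N : ℕ, ∃ i : ℕ, N ≤ i ∧ 1 ≤ i ∧ w i = false)
    (h1 : ∀ N : ℕ, ∃ i : ℕ, N ≤ i ∧ 1 ≤ i ∧ w i = true)
    (p : ℝ) :
    ∃ N : ℕ, ∀ n : ℕ, N ≤ n → (n : ℝ) ^ p < (dCount w n : ℝ) := by
  have hsw := exists_switch_ge (fun N => (h0 N).imp fun _ hi => ⟨hi.1, hi.2.2⟩)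
    (fun N => (h1 N).imp fun _ hi => ⟨hi.1, hi.2.2⟩)
  obtain ⟨c, hc, M, hM⟩ := exists_pow_le_dCount hsw (⌈p⌉₊ + 1)
  obtain ⟨L, hL⟩ := exists_nat_gt c⁻¹
  refine ⟨max M L, fun n hn => ?_⟩
  have hLn : (L : ℝ) ≤ n := by exact_mod_cast le_of_max_le_right hn
  have hL0 : 0 < L := Nat.cast_pos.mp ((inv_pos.mpr hc).trans hL)
  have hn1 : (1 : ℝ) ≤ n := by exact_mod_cast (by omega : 1 ≤ n)
  have hcn : 1 < c * n := by
    calc (1 : ℝ) = c * c⁻¹ := (mul_inv_cancel₀ hc.ne').symm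
      _ < c * n := by gcongr; exact hL.trans_le hLn
  calc (n : ℝ) ^ p ≤ (n : ℝ) ^ ⌈p⌉₊ := by
        rw [← Real.rpow_natCast]; exact Real.rpow_le_rpow_of_exponent_le hn1 (Nat.le_ceil p)
    _ < c * n * (n : ℝ) ^ ⌈p⌉₊ := lt_mul_of_one_lt_left (by positivity) hcn
    _ = c * (n : ℝ) ^ (⌈p⌉₊ + 1) := by ring
    _ ≤ dCount w n := hM n (le_of_max_le_left hn)

theorem stmt10 (w : ℕ → Bool)
    (h0 : ∀ N : ℕ, ∃ i : ℕ, N ≤ i ∧ 1 ≤ i ∧ w i = false)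
    (h1 : ∀ N : ℕ, ∃ i : ℕ, N ≤ i ∧ 1 ≤ i ∧ w i = true)
    (p : ℝ) (hp : 0 < p) :
    ∃ N : ℕ, ∀ n : ℕ, N ≤ n → (n : ℝ) ^ p < (dCount w n : ℝ) :=
  stmt10_general w h0 h1 p
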